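/- (Generalised Policy Improvement) Let π_1,…,π_n be policies with action-value functions Q^{π_1},…,Q^{π_n} on a common MDP, and define the GPI policy π(s) ∈ argmax_a max_i Q^{π_i}(s,a). Then Q^π(s,a) ≥ max_i Q^{π_i}(s,a) for all (s,a) ∈ S×A. -/

import Mathlib

open scoped RealInnerProductSpace

noncomputable section

variable {S A E : Type*}

/-- Expected value at step `n` of the (vector-valued) one-step function `f` along
trajectories that start with the state-action pair `(s, a)` and afterwards follow the
deterministic policy `π` in an MDP with transition kernel `p`. -/
def stepVal [Fintype S] [AddCommMonoid E] [Module ℝ E]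
    (p : S → A → S → ℝ) (π : S → A) (f : S → A → S → E) : ℕ → S → A → E
  | 0, s, a => ∑ s' : S, p s a s' • f s a s'
  | n + 1, s, a => ∑ s' : S, p s a s' • stepVal p π f n s' (π s')

/-- Expected discounted sum of the one-step quantities `f` when following policy `π`
after starting with the pair `(s, a)`. -/
def polVal [Fintype S] [NormedAddCommGroup E] [NormedSpace ℝ E]
    (p : S → A → S → ℝ) (γ : ℝ) (π : S → A) (f : S → A → S → E) (s : S) (a : A) : E :=
  ∑' n : ℕ, γ ^ n • stepVal p π f n s a

/-- Action-value function `Q^π` of policy `π` for the one-step reward `r`. -/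
def Qpol [Fintype S] (p : S → A → S → ℝ) (γ : ℝ) (π : S → A)
    (r : S → A → S → ℝ) (s : S) (a : A) : ℝ :=
  polVal p γ π r s a

/-- Successor features of policy `π`: the expected discounted sum of feature vectors. -/
def SF [Fintype S] {d : ℕ} (p : S → A → S → ℝ) (γ : ℝ) (π : S → A)
    (φ : S → A → S → EuclideanSpace ℝ (Fin d)) (s : S) (a : A) :
    EuclideanSpace ℝ (Fin d) :=
  polVal p γ π φ s a

/-- `p` is a probability transition kernel. -/
def IsKernel [Fintype S] (p : S → A → S → ℝ) : Prop :=
  (∀ s a s', 0 ≤ p s a s') ∧ ∀ s a, ∑ s' : S, p s a s' = 1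

/-- Optimal action-value function, over deterministic stationary policies. -/
def Qstar [Fintype S] (p : S → A → S → ℝ) (γ : ℝ) (r : S → A → S → ℝ)
    (s : S) (a : A) : ℝ :=
  ⨆ π : S → A, Qpol p γ π r s a

/-- Reward linear in the features `φ` with task (weight) vector `w`. -/
def rTask {d : ℕ} (φ : S → A → S → EuclideanSpace ℝ (Fin d))
    (w : EuclideanSpace ℝ (Fin d)) : S → A → S → ℝ :=
  fun s a s' => ⟪φ s a s', w⟫

end

/-!
Let `c` be the largest gap `Q^{π_i}(s,a) - Q^π(s,a)` over all `s`, `a`, `i`. By the Bellman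
equation the gap at `(s,a)` is `γ` times the expected gap between `Q^{π_i}(s', π_i s')` and
`Q^π(s', π s')`. Greediness of `π` gives `Q^{π_i}(s', π_i s') ≤ max_j Q^{π_j}(s', π s')`, which
is at most `Q^π(s', π s') + c`. Hence `c ≤ γ c`, and `γ < 1` forces `c ≤ 0`.
-/

open Finset

namespace IsKernel

variable {S A : Type*} [Fintype S] {p : S → A → S → ℝ}

theorem norm_sum_smul_le {E : Type*} [SeminormedAddCommGroup E] [NormedSpace ℝ E]
    (hp : IsKernel p) (s : S) (a : A) {g : S → E} {C : ℝ} (hg : ∀ s', ‖g s'‖ ≤ C) :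
    ‖∑ s', p s a s' • g s'‖ ≤ C :=
  calc ‖∑ s', p s a s' • g s'‖ ≤ ∑ s', p s a s' * ‖g s'‖ := by
        refine (norm_sum_le _ _).trans_eq (sum_congr rfl fun s' _ => ?_)
        rw [norm_smul, Real.norm_of_nonneg (hp.1 s a s')]
    _ ≤ ∑ s', p s a s' * C := by gcongr with s'; exacts [hp.1 s a s', hg s']
    _ = C := by rw [← sum_mul, hp.2 s a, one_mul]

theorem sum_mul_le_sum_mul_add (hp : IsKernel p) (s : S) (a : A) {g h : S → ℝ} {c : ℝ}
    (hgh : ∀ s', g s' ≤ h s' + c) :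
    ∑ s', p s a s' * g s' ≤ ∑ s', p s a s' * h s' + c :=
  calc ∑ s', p s a s' * g s' ≤ ∑ s', p s a s' * (h s' + c) := by
        gcongr with s'; exacts [hp.1 s a s', hgh s']
    _ = ∑ s', p s a s' * h s' + c := by
        rw [sum_congr rfl fun s' _ => mul_add _ _ _, sum_add_distrib, ← sum_mul, hp.2 s a,
          one_mul]

end IsKernel

section Bellman

variable {S A E : Type*} [Fintype S] [NormedAddCommGroup E] [NormedSpace ℝ E]
  {p : S → A → S → ℝ}

theorem norm_stepVal_le (hp : IsKernel p) (π : S → A) {f : S → A → S → E} {C : ℝ}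
    (hf : ∀ s a s', ‖f s a s'‖ ≤ C) (n : ℕ) (s : S) (a : A) :
    ‖stepVal p π f n s a‖ ≤ C := by
  induction n generalizing s a with
  | zero => exact hp.norm_sum_smul_le s a (hf s a)
  | succ n ih => exact hp.norm_sum_smul_le s a fun s' => ih s' (π s')

variable [Finite A] [CompleteSpace E]

theorem summable_stepVal (hp : IsKernel p) {γ : ℝ} (hγ0 : 0 ≤ γ) (hγ1 : γ < 1) (π : S → A)
    (f : S → A → S → E) (s : S) (a : A) :
    Summable fun n => γ ^ n • stepVal p π f n s a := by
  obtain ⟨C, hC⟩ : ∃ C, ∀ s a s', ‖f s a s'‖ ≤ C := by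
    obtain ⟨C, hC⟩ := (Set.finite_range fun x : S × A × S => ‖f x.1 x.2.1 x.2.2‖).bddAbove
    exact ⟨C, fun s a s' => hC ⟨(s, a, s'), rfl⟩⟩
  refine ((summable_geometric_of_lt_one hγ0 hγ1).mul_right C).of_norm_bounded fun n => ?_
  rw [norm_smul, norm_pow, Real.norm_of_nonneg hγ0]
  exact mul_le_mul_of_nonneg_left (norm_stepVal_le hp π hC n s a) (pow_nonneg hγ0 n)

theorem polVal_eq_bellman (hp : IsKernel p) {γ : ℝ} (hγ0 : 0 ≤ γ) (hγ1 : γ < 1) (π : S → A)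
    (f : S → A → S → E) (s : S) (a : A) :
    polVal p γ π f s a =
      ∑ s', p s a s' • f s a s' + γ • ∑ s', p s a s' • polVal p γ π f s' (π s') := by
  have hsum := summable_stepVal hp hγ0 hγ1 π f
  have hshift : ∀ n, γ ^ (n + 1) • stepVal p π f (n + 1) s a =
      γ • ∑ s', p s a s' • γ ^ n • stepVal p π f n s' (π s') := by
    intro n
    simp only [stepVal, smul_sum, smul_comm (γ ^ n) (p s a _), pow_succ', mul_smul]
  rw [polVal, (hsum s a).tsum_eq_zero_add, pow_zero, one_smul, tsum_congr hshift,
    (summable_sum fun s' _ => (hsum s' (π s')).const_smul (p s a s')).tsum_const_smul,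
    Summable.tsum_finsetSum fun s' _ => (hsum s' (π s')).const_smul (p s a s')]
  simp only [(hsum _ _).tsum_const_smul, polVal, stepVal]

theorem Qpol_eq_bellman (hp : IsKernel p) {γ : ℝ} (hγ0 : 0 ≤ γ) (hγ1 : γ < 1) (π : S → A)
    (r : S → A → S → ℝ) (s : S) (a : A) :
    Qpol p γ π r s a =
      ∑ s', p s a s' * r s a s' + γ * ∑ s', p s a s' * Qpol p γ π r s' (π s') :=
  polVal_eq_bellman hp hγ0 hγ1 π r s a

end Bellman

theorem nonpos_of_bound_imp_mul_bound {X : Type*} [Finite X] {D : X → ℝ} {γ : ℝ} (hγ1 : γ < 1)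
    (hD : ∀ c, (∀ x, D x ≤ c) → ∀ x, D x ≤ γ * c) (x : X) : D x ≤ 0 := by
  have : Nonempty X := ⟨x⟩
  obtain ⟨x₀, hx₀⟩ := Finite.exists_max D
  have hx₀_nonpos : D x₀ ≤ 0 := by nlinarith [hD (D x₀) hx₀ x₀]
  exact (hx₀ x).trans hx₀_nonpos

section GPI

variable {S A ι : Type*} [Fintype S] [Finite ι] {p : S → A → S → ℝ} {γ : ℝ}
  {r : S → A → S → ℝ} {πs : ι → S → A} {π : S → A}

theorem Qpol_le_Qpol_greedy_add
    (hGPI : ∀ s a, (⨆ i, Qpol p γ (πs i) r s a) ≤ ⨆ i, Qpol p γ (πs i) r s (π s)) {c : ℝ}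
    (hc : ∀ s a i, Qpol p γ (πs i) r s a - Qpol p γ π r s a ≤ c) (s : S) (i : ι) :
    Qpol p γ (πs i) r s (πs i s) ≤ Qpol p γ π r s (π s) + c := by
  have : Nonempty ι := ⟨i⟩
  calc Qpol p γ (πs i) r s (πs i s) ≤ ⨆ j, Qpol p γ (πs j) r s (πs i s) :=
        le_ciSup (f := fun j => Qpol p γ (πs j) r s (πs i s)) (Finite.bddAbove_range _) i
    _ ≤ ⨆ j, Qpol p γ (πs j) r s (π s) := hGPI s (πs i s)
    _ ≤ Qpol p γ π r s (π s) + c := ciSup_le fun j => by linarith [hc s (π s) j]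

variable [Finite A]

theorem Qpol_sub_Qpol_le_mul (hp : IsKernel p) (hγ0 : 0 ≤ γ) (hγ1 : γ < 1)
    (hGPI : ∀ s a, (⨆ i, Qpol p γ (πs i) r s a) ≤ ⨆ i, Qpol p γ (πs i) r s (π s)) {c : ℝ}
    (hc : ∀ s a i, Qpol p γ (πs i) r s a - Qpol p γ π r s a ≤ c) (s : S) (a : A) (i : ι) :
    Qpol p γ (πs i) r s a - Qpol p γ π r s a ≤ γ * c := by
  have hexp := hp.sum_mul_le_sum_mul_add s a (Qpol_le_Qpol_greedy_add hGPI hc · i)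
  rw [Qpol_eq_bellman hp hγ0 hγ1 (πs i), Qpol_eq_bellman hp hγ0 hγ1 π]
  linarith [mul_le_mul_of_nonneg_left hexp hγ0]

end GPI

theorem statement2_general {S A : Type*} [Fintype S] [Fintype A]
    (p : S → A → S → ℝ) (hp : IsKernel p)
    (γ : ℝ) (hγ0 : 0 ≤ γ) (hγ1 : γ < 1)
    (r : S → A → S → ℝ) (n : ℕ) (πs : Fin n → S → A) (π : S → A)
    (hGPI : ∀ s a, (⨆ i, Qpol p γ (πs i) r s a) ≤ ⨆ i, Qpol p γ (πs i) r s (π s)) :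
    ∀ s a i, Qpol p γ (πs i) r s a ≤ Qpol p γ π r s a := by
  intro s a i
  have hgap := nonpos_of_bound_imp_mul_bound
    (D := fun x : S × A × Fin n => Qpol p γ (πs x.2.2) r x.1 x.2.1 - Qpol p γ π r x.1 x.2.1)
    hγ1 (fun c hc s => Qpol_sub_Qpol_le_mul hp hγ0 hγ1 hGPI (fun s a i => hc (s, a, i)) ..)
    (s, a, i)
  linarith

/-- Generalised Policy Improvement: if `π(s)` is a greedy action for
`max_i Q^{π_i}(s,·)` at every state, then `Q^π ≥ max_i Q^{π_i}` everywhere. -/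
theorem statement2 {S A : Type*} [Fintype S] [Fintype A] [Nonempty S] [Nonempty A]
    (p : S → A → S → ℝ) (hp : IsKernel p)
    (γ : ℝ) (hγ0 : 0 ≤ γ) (hγ1 : γ < 1)
    (r : S → A → S → ℝ) (n : ℕ) (hn : 0 < n) (πs : Fin n → S → A) (π : S → A)
    (hGPI : ∀ s a, (⨆ i, Qpol p γ (πs i) r s a) ≤ ⨆ i, Qpol p γ (πs i) r s (π s)) :
    ∀ s a i, Qpol p γ (πs i) r s a ≤ Qpol p γ π r s a :=
  statement2_general p hp γ hγ0 hγ1 r n πs π hGPI
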